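/- arXiv:1808.09616 — 4 statements merged into one kernel-verified Lean document; each statement's English description precedes it below -/
import Mathlib

section
/- For 0 ≤ l ≤ m, the ideal M^l of A is generated (as an ideal) by the finite set G_l = {(x_1-1)^{i_1}···(x_m-1)^{i_m} : i_j ∈ {0,1}, i_1+···+i_m = l}. -/
set_option synthInstance.maxHeartbeats 1000000
set_option maxHeartbeats 1000000

open MvPolynomial

noncomputable def gI (m : ℕ) (I : Finset (Fin m)) : MvPolynomial (Fin m) (ZMod 2) :=
  ∏ i ∈ I, (X i - 1)

noncomputable def XI (m : ℕ) (I : Finset (Fin m)) : MvPolynomial (Fin m) (ZMod 2) :=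
  ∏ i ∈ I, X i

/-- The ideal (X₁²-1, …, Xₘ²-1). -/
noncomputable def relIdeal (m : ℕ) : Ideal (MvPolynomial (Fin m) (ZMod 2)) :=
  Ideal.span {p | ∃ i : Fin m, p = X i ^ 2 - 1}

/-- The ambient algebra A = F₂[X₁,…,Xₘ]/(X₁²-1,…,Xₘ²-1). -/
abbrev Amb (m : ℕ) := MvPolynomial (Fin m) (ZMod 2) ⧸ relIdeal m

/-- The ideal M of A generated by the images of the Xᵢ - 1. -/
noncomputable def Mideal (m : ℕ) : Ideal (Amb m) :=
  Ideal.span {a | ∃ i : Fin m, a = Ideal.Quotient.mk (relIdeal m) (X i - 1)}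

/-!
Each generator `xᵢ - 1` of `M` squares to zero in characteristic 2, so a product of `l`
generators either repeats a factor and vanishes, or is the product over an `l`-subset.
-/

section SquareZero

open scoped Pointwise

variable {R ι : Type*} [CommSemiring R] (x : ι → R)

def squarefreeProds (l : ℕ) : Set R :=
  {a | ∃ I : Finset ι, I.card = l ∧ a = ∏ i ∈ I, x i}

variable {x}

lemma squarefreeProds_mul_subset (hx : ∀ i, x i ^ 2 = 0) (l : ℕ) :
    squarefreeProds x l * Set.range x ⊆ squarefreeProds x (l + 1) ∪ {0} := by
  classical
  rintro _ ⟨_, ⟨I, rfl, rfl⟩, _, ⟨i, rfl⟩, rfl⟩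
  by_cases hi : i ∈ I
  · right
    show _ * _ = (0 : R)
    rw [← Finset.mul_prod_erase I x hi, mul_comm, ← mul_assoc, ← sq, hx, zero_mul]
  · left
    exact ⟨insert i I, Finset.card_insert_of_notMem hi, by rw [Finset.prod_insert hi, mul_comm]⟩

lemma squarefreeProds_succ_subset (l : ℕ) :
    squarefreeProds x (l + 1) ⊆ squarefreeProds x l * Set.range x := by
  classical
  rintro _ ⟨J, hJ, rfl⟩
  obtain ⟨i, hi⟩ := Finset.card_pos.mp (by omega : 0 < J.card)
  refine ⟨_, ⟨J.erase i, by rw [Finset.card_erase_of_mem hi, hJ, l.add_sub_cancel], rfl⟩,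
    x i, ⟨i, rfl⟩, ?_⟩
  exact (mul_comm _ _).trans (Finset.mul_prod_erase J x hi)

theorem Ideal.span_range_pow_of_sq_eq_zero (hx : ∀ i, x i ^ 2 = 0) (l : ℕ) :
    Ideal.span (Set.range x) ^ l = Ideal.span (squarefreeProds x l) := by
  induction l with
  | zero =>
    rw [pow_zero, Ideal.one_eq_top, eq_comm, Ideal.eq_top_iff_one]
    exact Ideal.subset_span ⟨∅, rfl, Finset.prod_empty.symm⟩
  | succ l ih =>
    rw [pow_succ, ih, Ideal.span_mul_span']
    apply le_antisymm
    · rw [← Ideal.span_insert_zero (s := squarefreeProds x (l + 1)), Set.insert_eq,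
        Set.union_comm]
      exact Ideal.span_mono (squarefreeProds_mul_subset hx l)
    · exact Ideal.span_mono (squarefreeProds_succ_subset l)

end SquareZero

lemma mk_X_sub_one_sq (m : ℕ) (i : Fin m) :
    Ideal.Quotient.mk (relIdeal m) (X i - 1) ^ 2 = 0 := by
  have hchar : (X i - 1 : MvPolynomial (Fin m) (ZMod 2)) ^ 2 = X i ^ 2 - 1 := by
    linear_combination (1 - X i) * CharTwo.two_eq_zero (R := MvPolynomial (Fin m) (ZMod 2))
  rw [← map_pow, hchar, Ideal.Quotient.eq_zero_iff_mem]
  exact Ideal.subset_span ⟨i, rfl⟩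

theorem stmt4_general (m l : ℕ) :
    Mideal m ^ l =
      Ideal.span {a : Amb m | ∃ I : Finset (Fin m), I.card = l ∧
        a = Ideal.Quotient.mk (relIdeal m) (gI m I)} := by
  have hM : Mideal m =
      Ideal.span (Set.range fun i ↦ Ideal.Quotient.mk (relIdeal m) (X i - 1)) := by
    rw [Mideal]
    congr 1
    ext a
    simp [eq_comm]
  rw [hM, Ideal.span_range_pow_of_sq_eq_zero (mk_X_sub_one_sq m) l, squarefreeProds]
  simp only [gI, map_prod]

/-- Mˡ is generated, as an ideal of A, by the finite set
G_l = {(x₁-1)^{i₁}⋯(xₘ-1)^{iₘ} : i₁+⋯+iₘ = l}. -/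
theorem stmt4 (m l : ℕ) (hl : l ≤ m) :
    Mideal m ^ l =
      Ideal.span {a : Amb m | ∃ I : Finset (Fin m), I.card = l ∧
        a = Ideal.Quotient.mk (relIdeal m) (gI m I)} :=
  stmt4_general m l
end

section
/- The minimum Hamming weight of a nonzero element of the Reed-Muller code M^l (viewed as a subspace of F_2^{2^m}) is 2^l, for 0 ≤ l ≤ m. -/
set_option synthInstance.maxHeartbeats 1000000
set_option maxHeartbeats 1000000

open MvPolynomial

/-- The identification F₂^{2^m} → A sending a coefficient vector (indexed by the subsets
S ⊆ {1,…,m}) to the corresponding element of A. -/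
noncomputable def toA (m : ℕ) (w : Finset (Fin m) → ZMod 2) : Amb m :=
  Ideal.Quotient.mk (relIdeal m) (∑ S : Finset (Fin m), w S • XI m S)

/-!
The substitution `Xᵢ ↦ Xᵢ + 1` maps `M` into the ideal of the variables and the relation
`Xᵢ² - 1` to `Xᵢ²` (characteristic 2). Comparing coefficients of the squarefree monomials `X^T`
shows that every word `w` of `Mˡ` has vanishing superset sums `∑_{S ⊇ T} w S` for `|T| < l`.

A nonzero word with this property has weight at least `2ˡ`, by the Plotkin `(u | u + v)` induction:
split off one coordinate `a` and let `u = w` on sets avoiding `a`, `v = w ∘ insert a`. Then `v` has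
the property for `l - 1` and `u + v` for `l`; so if `u` or `v` vanishes the other has it for `l`,
and otherwise both have it for `l - 1` and contribute `2ˡ⁻¹` each.

The bound is attained by `∏_{i ∈ I} (Xᵢ - 1)` with `|I| = l`, the indicator of the subsets of `I`.
-/

open Finset

section SupersetSum

variable {α R : Type*} [DecidableEq α] [AddCommGroup R]

def supersetSum (G : Finset α) (w : Finset α → R) (S : Finset α) : R :=
  ∑ T ∈ G.powerset with S ⊆ T, w T

lemma supersetSum_insert {a : α} {G S : Finset α} (ha : a ∉ G) (haS : a ∉ S)
    (w : Finset α → R) :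
    supersetSum (insert a G) w S =
      supersetSum G w S + supersetSum G (fun T => w (insert a T)) S := by
  simp only [supersetSum, sum_filter, sum_powerset_insert ha, subset_insert_iff_of_notMem haS]

lemma supersetSum_insert_insert {a : α} {G S : Finset α} (ha : a ∉ G) (haS : a ∉ S)
    (w : Finset α → R) :
    supersetSum (insert a G) w (insert a S) = supersetSum G (fun T => w (insert a T)) S := by
  rw [supersetSum, supersetSum, sum_filter, sum_filter, sum_powerset_insert ha,
    sum_eq_zero fun T hT => if_neg fun h => ha (mem_powerset.1 hT (h (mem_insert_self a S))),
    zero_add]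
  simp only [insert_subset_insert_iff haS]

lemma supersetSum_eq_zero {G : Finset α} {w : Finset α → R} (hw : ∀ T ⊆ G, w T = 0)
    (S : Finset α) : supersetSum G w S = 0 :=
  sum_eq_zero fun T hT => hw T (mem_powerset.1 (mem_filter.1 hT).1)

variable [DecidableEq R]

lemma card_filter_powerset_insert {a : α} {G : Finset α} (ha : a ∉ G) (w : Finset α → R) :
    #{T ∈ (insert a G).powerset | w T ≠ 0} =
      #{T ∈ G.powerset | w T ≠ 0} + #{T ∈ G.powerset | w (insert a T) ≠ 0} := by
  simp only [card_filter, sum_powerset_insert ha]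

theorem two_pow_le_card_support_of_supersetSum_eq_zero {G : Finset α} {l : ℕ}
    {w : Finset α → R} (hw : ∃ T ⊆ G, w T ≠ 0)
    (hsum : ∀ S ⊆ G, S.card < l → supersetSum G w S = 0) :
    2 ^ l ≤ #{T ∈ G.powerset | w T ≠ 0} := by
  induction G using Finset.induction_on generalizing l w with
  | empty =>
    obtain ⟨T, hT, hwT⟩ := hw
    obtain rfl := subset_empty.1 hT
    obtain rfl : l = 0 := by
      by_contra hl
      exact hwT (by simpa [supersetSum] using hsum ∅ le_rfl (by simpa [Nat.pos_iff_ne_zero]))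
    exact card_pos.2 ⟨∅, by simp [hwT]⟩
  | insert a G ha ih =>
    set w' : Finset α → R := fun T => w (insert a T)
    have hsum₀ : ∀ S ⊆ G, S.card < l → supersetSum G w S + supersetSum G w' S = 0 :=
      fun S hS hl => supersetSum_insert ha (notMem_mono hS ha) w ▸
        hsum S (hS.trans (subset_insert a G)) hl
    have hsum₁ : ∀ S ⊆ G, S.card < l - 1 → supersetSum G w' S = 0 := fun S hS hl => by
      have haS := notMem_mono hS ha
      rw [← supersetSum_insert_insert ha haS]
      exact hsum _ (insert_subset_insert a hS) (by rw [card_insert_of_notMem haS]; omega)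
    rw [card_filter_powerset_insert ha]
    by_cases hw' : ∃ T ⊆ G, w' T ≠ 0
    · by_cases hw₀ : ∃ T ⊆ G, w T ≠ 0
      · have hsum₀' : ∀ S ⊆ G, S.card < l - 1 → supersetSum G w S = 0 := fun S hS hl => by
          simpa [hsum₁ S hS hl] using hsum₀ S hS (by omega)
        calc 2 ^ l ≤ 2 ^ (l - 1) + 2 ^ (l - 1) := by
              rcases l with _ | l
              · simp
              · simp [pow_succ, mul_two]
          _ ≤ _ := add_le_add (ih hw₀ hsum₀') (ih hw' hsum₁)
      · push Not at hw₀
        refine (ih hw' fun S hS hl => ?_).trans (Nat.le_add_left _ _)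
        simpa [supersetSum_eq_zero hw₀] using hsum₀ S hS hl
    · push Not at hw'
      have hw₀ : ∃ T ⊆ G, w T ≠ 0 := by
        obtain ⟨T, hT, hwT⟩ := hw
        by_cases haT : a ∈ T
        · refine absurd (hw' (T.erase a) ?_) (by simpa [w', insert_erase haT])
          exact subset_insert_iff.1 hT
        · exact ⟨T, (subset_insert_iff_of_notMem haT).1 hT, hwT⟩
      refine (ih hw₀ fun S hS hl => ?_).trans (Nat.le_add_right _ _)
      simpa [supersetSum_eq_zero hw'] using hsum₀ S hS hl

theorem two_pow_le_hammingNorm_of_supersetSum_eq_zero [Fintype α] {l : ℕ}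
    {w : Finset α → R} (hw : w ≠ 0)
    (hsum : ∀ S : Finset α, S.card < l → supersetSum univ w S = 0) :
    2 ^ l ≤ hammingNorm w := by
  obtain ⟨T, hT⟩ := Function.ne_iff.1 hw
  simpa [hammingNorm] using
    two_pow_le_card_support_of_supersetSum_eq_zero ⟨T, subset_univ T, hT⟩ fun S _ => hsum S

end SupersetSum

section Squarefree

variable {σ R : Type*} [CommSemiring R]

noncomputable def sqfreeExp (T : Finset σ) : σ →₀ ℕ := ∑ i ∈ T, Finsupp.single i 1

lemma sqfreeExp_apply [DecidableEq σ] (T : Finset σ) (i : σ) :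
    sqfreeExp T i = if i ∈ T then 1 else 0 := by
  simp [sqfreeExp, Finsupp.finsetSum_apply, Finsupp.single_apply]

lemma sqfreeExp_injective : Function.Injective (sqfreeExp (σ := σ)) := by
  classical
  intro S T h
  ext i
  have := DFunLike.congr_fun h i
  simp only [sqfreeExp_apply] at this
  split_ifs at this <;> simp_all

lemma degree_sqfreeExp (T : Finset σ) : (sqfreeExp T).degree = T.card := by
  simp [sqfreeExp, Finsupp.degree_single]

lemma prod_X_eq_monomial_sqfreeExp (T : Finset σ) :
    ∏ i ∈ T, X i = monomial (sqfreeExp T) (1 : R) := by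
  rw [sqfreeExp, monomial_sum_one]
  rfl

lemma coeff_sqfreeExp_eq_zero_of_mem_span_X_sq {p : MvPolynomial σ R}
    (hp : p ∈ Ideal.span (Set.range fun i => (X i : MvPolynomial σ R) ^ 2)) (T : Finset σ) :
    coeff (sqfreeExp T) p = 0 := by
  classical
  have : Set.range (fun i => (X i : MvPolynomial σ R) ^ 2) =
      (fun s => monomial s 1) '' Set.range fun i => Finsupp.single i 2 := by
    rw [← Set.range_comp]; simp [Function.comp_def, X_pow_eq_monomial]
  rw [this, mem_ideal_span_monomial_image] at hp
  by_contra h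
  obtain ⟨_, ⟨i, rfl⟩, hi⟩ := hp _ (mem_support_iff.2 h)
  have := hi i
  simp only [Finsupp.single_eq_same, sqfreeExp_apply] at this
  split_ifs at this <;> omega

end Squarefree

section ShiftVars

variable {σ R : Type*} [CommRing R]

noncomputable def shiftVars : MvPolynomial σ R →ₐ[R] MvPolynomial σ R := aeval fun i => X i + 1

lemma shiftVars_X_sub_one (i : σ) : shiftVars (X i - 1 : MvPolynomial σ R) = X i := by
  simp [shiftVars]

lemma shiftVars_X_sq_sub_one [CharP R 2] (i : σ) :
    shiftVars (X i ^ 2 - 1 : MvPolynomial σ R) = X i ^ 2 := by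
  simp [shiftVars, add_sq, CharTwo.two_eq_zero]

lemma map_shiftVars_span_X_sub_one_le :
    (Ideal.span (Set.range fun i => (X i - 1 : MvPolynomial σ R))).map shiftVars ≤
      idealOfVars σ R := by
  rw [Ideal.map_span, ← Set.range_comp]
  exact Ideal.span_mono (by simp [Function.comp_def, shiftVars_X_sub_one])

end ShiftVars

section ReedMuller

variable {m : ℕ}

lemma Mideal_eq_map : Mideal m = (Ideal.span (Set.range fun i => X i - 1)).map
    (Ideal.Quotient.mk (relIdeal m)) := by
  rw [Mideal, Ideal.map_span, ← Set.range_comp]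
  congr 1
  ext
  simp [eq_comm]

lemma map_shiftVars_relIdeal_le :
    (relIdeal m).map shiftVars ≤ Ideal.span (Set.range fun i => X i ^ 2) := by
  rw [relIdeal, Ideal.map_span, Ideal.span_le]
  rintro _ ⟨_, ⟨i, rfl⟩, rfl⟩
  exact Ideal.subset_span ⟨i, (shiftVars_X_sq_sub_one i).symm⟩

lemma prod_X_add_one_eq_sum_XI (S : Finset (Fin m)) :
    ∏ i ∈ S, (X i + 1) = ∑ T ∈ S.powerset, XI m T := by
  simp [prod_add, XI]

lemma coeff_sqfreeExp_XI (S T : Finset (Fin m)) :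
    coeff (sqfreeExp T) (XI m S) = if S = T then 1 else 0 := by
  simp [XI, prod_X_eq_monomial_sqfreeExp, coeff_monomial, sqfreeExp_injective.eq_iff]

lemma coeff_sqfreeExp_shiftVars_sum (w : Finset (Fin m) → ZMod 2) (T : Finset (Fin m)) :
    coeff (sqfreeExp T) (shiftVars (∑ S, w S • XI m S)) = supersetSum univ w T := by
  have hXI : ∀ S, shiftVars (XI m S) = ∑ U ∈ S.powerset, XI m U := fun S => by
    simp [XI, shiftVars, prod_X_add_one_eq_sum_XI]
  simp [hXI, coeff_sum, coeff_sqfreeExp_XI, supersetSum, sum_filter]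

lemma supersetSum_eq_zero_of_toA_mem_pow {l : ℕ} {w : Finset (Fin m) → ZMod 2}
    (hw : toA m w ∈ Mideal m ^ l) {T : Finset (Fin m)} (hT : T.card < l) :
    supersetSum univ w T = 0 := by
  rw [Mideal_eq_map, ← Ideal.map_pow] at hw
  have hmem := Ideal.mem_comap.2 hw
  rw [Ideal.comap_map_of_surjective _ Ideal.Quotient.mk_surjective, ← RingHom.ker_eq_comap_bot,
    Ideal.mk_ker] at hmem
  obtain ⟨y, hy, z, hz, hyz⟩ := Submodule.mem_sup.1 hmem
  have hy' : shiftVars y ∈ idealOfVars (Fin m) (ZMod 2) ^ l := by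
    refine Ideal.pow_right_mono map_shiftVars_span_X_sub_one_le l ?_
    rw [← Ideal.map_pow]
    exact Ideal.mem_map_of_mem _ hy
  have hz' := map_shiftVars_relIdeal_le (Ideal.mem_map_of_mem shiftVars hz)
  rw [← coeff_sqfreeExp_shiftVars_sum, ← hyz, map_add, coeff_add,
    (mem_pow_idealOfVars_iff' l _).1 hy' _ (by rwa [degree_sqfreeExp]),
    coeff_sqfreeExp_eq_zero_of_mem_span_X_sq hz', add_zero]

lemma toA_indicator_powerset (I : Finset (Fin m)) :
    toA m (fun S => if S ⊆ I then 1 else 0) = Ideal.Quotient.mk (relIdeal m) (gI m I) := by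
  simp only [toA, gI, ite_smul, one_smul, zero_smul, CharTwo.sub_eq_add,
    prod_X_add_one_eq_sum_XI, ← sum_filter, filter_subset_univ]

lemma mk_gI_mem_pow (I : Finset (Fin m)) :
    Ideal.Quotient.mk (relIdeal m) (gI m I) ∈ Mideal m ^ I.card := by
  rw [gI, map_prod, ← prod_const (b := Mideal m)]
  exact Ideal.prod_mem_prod fun i _ => Ideal.subset_span ⟨i, rfl⟩

lemma hammingNorm_indicator_powerset (I : Finset (Fin m)) :
    hammingNorm (fun S => if S ⊆ I then (1 : ZMod 2) else 0) = 2 ^ I.card := by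
  simp [hammingNorm, filter_subset_univ]

end ReedMuller

/-- the minimum Hamming weight of a nonzero word of the Reed–Muller code Mˡ
(viewed inside F₂^{2^m}) is 2ˡ. -/
theorem stmt6 (m l : ℕ) (hl : l ≤ m) :
    IsLeast {k : ℕ | ∃ w : Finset (Fin m) → ZMod 2,
      w ≠ 0 ∧ toA m w ∈ Mideal m ^ l ∧ hammingNorm w = k} (2 ^ l) := by
  obtain ⟨I, -, rfl⟩ := exists_subset_card_eq (s := (univ : Finset (Fin m))) (by simpa using hl)
  refine ⟨⟨_, fun h => by simpa using congr_fun h ∅, toA_indicator_powerset I ▸ mk_gI_mem_pow I,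
    hammingNorm_indicator_powerset I⟩, ?_⟩
  rintro k ⟨w, hw, hmem, rfl⟩
  exact two_pow_le_hammingNorm_of_supersetSum_eq_zero hw fun T hT =>
    supersetSum_eq_zero_of_toA_mem_pow hmem hT
end

section
/- Let f be a polynomial in F_2[X_1,...,X_m] that is a sum of squarefree monomials (all exponents 0 or 1). Then f belongs to ⟨G⟩ if and only if f belongs to ⟨G ∪ H⟩, where G = {∏_{i∈I}(X_i-1) : |I| = l} and H = {X_1^2-1,...,X_m^2-1}. -/
set_option synthInstance.maxHeartbeats 1000000
set_option maxHeartbeats 1000000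

open MvPolynomial

/-- Total degree of an exponent vector. -/
def expDeg {m : ℕ} (α : Fin m →₀ ℕ) : ℕ := α.sum fun _ n => n

/-- Graded lexicographic order on exponent vectors, with X₁ > X₂ > ⋯ > Xₘ :
`grlexLT α β` means α < β. -/
def grlexLT {m : ℕ} (α β : Fin m →₀ ℕ) : Prop :=
  expDeg α < expDeg β ∨
    (expDeg α = expDeg β ∧ ∃ i : Fin m, α i < β i ∧ ∀ j : Fin m, j < i → α j = β j)

/-- `IsLM f α` : α is the leading monomial (w.r.t. grlex) of the nonzero polynomial f. -/
def IsLM {m : ℕ} (f : MvPolynomial (Fin m) (ZMod 2)) (α : Fin m →₀ ℕ) : Prop :=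
  α ∈ f.support ∧ ∀ β ∈ f.support, ¬ grlexLT α β

/-- The ideal generated by the leading terms of the members of S (coefficients are 1
since we work over F₂). -/
noncomputable def ltIdeal {m : ℕ} (S : Set (MvPolynomial (Fin m) (ZMod 2))) :
    Ideal (MvPolynomial (Fin m) (ZMod 2)) :=
  Ideal.span {p | ∃ f ∈ S, ∃ α, IsLM f α ∧ p = monomial α 1}

/-- `G` is a Groebner basis of the ideal `I` (w.r.t. the graded lexicographic order):
G ⊆ I and the leading terms of G generate the ideal of leading terms of I. -/
def IsGroebner {m : ℕ} (G : Set (MvPolynomial (Fin m) (ZMod 2)))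
    (I : Ideal (MvPolynomial (Fin m) (ZMod 2))) : Prop :=
  G ⊆ ↑I ∧ ltIdeal G = ltIdeal (I : Set (MvPolynomial (Fin m) (ZMod 2)))

/-- G = {∏_{i∈I}(Xᵢ-1) : |I| = l}. -/
def Gset (m l : ℕ) : Set (MvPolynomial (Fin m) (ZMod 2)) :=
  {p | ∃ I : Finset (Fin m), I.card = l ∧ p = gI m I}

/-- H = {X₁²-1, …, Xₘ²-1}. -/
def Hset (m : ℕ) : Set (MvPolynomial (Fin m) (ZMod 2)) :=
  {p | ∃ i : Fin m, p = X i ^ 2 - 1}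



noncomputable def phi (m : ℕ) : MvPolynomial (Fin m) (ZMod 2) →ₐ[ZMod 2] MvPolynomial (Fin m) (ZMod 2) :=
  aeval (fun i => X i + 1)

lemma one_one (m : ℕ) : (1 + 1 : MvPolynomial (Fin m) (ZMod 2)) = 0 := by
  rw [← C_1, ← C_add]
  have : (1 + 1 : ZMod 2) = 0 := by decide
  rw [this, C_0]

lemma phi_phi (m : ℕ) (f : MvPolynomial (Fin m) (ZMod 2)) : phi m (phi m f) = f := by
  have h : (phi m).comp (phi m) = AlgHom.id _ _ := by
    apply MvPolynomial.algHom_ext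
    intro i
    simp only [phi, AlgHom.comp_apply, aeval_X, map_add, map_one, AlgHom.id_apply]
    rw [add_assoc, one_one, add_zero]
  calc phi m (phi m f) = ((phi m).comp (phi m)) f := rfl
    _ = f := by rw [h]; rfl

lemma mem_span_iff (m : ℕ) (S : Set (MvPolynomial (Fin m) (ZMod 2)))
    (f : MvPolynomial (Fin m) (ZMod 2)) :
    f ∈ Ideal.span S ↔ phi m f ∈ Ideal.span (phi m '' S) := by
  constructor
  · intro h
    have h2 := Ideal.mem_map_of_mem (phi m).toRingHom h
    rwa [Ideal.map_span] at h2
  · intro h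
    have h2 := Ideal.mem_map_of_mem (phi m).toRingHom h
    rw [Ideal.map_span, ← Set.image_comp] at h2
    have hS : (⇑(phi m).toRingHom ∘ ⇑(phi m)) '' S = S := by
      ext x
      constructor
      · rintro ⟨y, hy, rfl⟩
        simpa [Function.comp, phi_phi] using hy
      · intro hx
        exact ⟨x, hx, by simp [Function.comp, phi_phi]⟩
    rw [hS] at h2
    simpa [phi_phi] using h2

lemma sq_prod (m : ℕ) (S : Finset (Fin m)) :
    ∀ α ∈ (∏ i ∈ S, (X i + 1) : MvPolynomial (Fin m) (ZMod 2)).support,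
      ∀ i : Fin m, α i ≤ if i ∈ S then 1 else 0 := by
  classical
  induction S using Finset.induction_on with
  | empty =>
    intro α hα i
    rw [Finset.prod_empty, ← C_1, C_apply, support_monomial,
      if_neg one_ne_zero, Finset.mem_singleton] at hα
    subst hα
    simp
  | @insert j S hj ih =>
    intro α hα i
    rw [Finset.prod_insert hj, add_mul, one_mul] at hα
    have := MvPolynomial.support_add hα
    rw [Finset.mem_union] at this
    rcases this with h1 | h2
    · -- α ∈ support (X j * P)
      rw [MvPolynomial.mem_support_iff, coeff_X_mul'] at h1
      split_ifs at h1 with hjα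
      · have hβ : (α - Finsupp.single j 1) ∈
            (∏ i ∈ S, (X i + 1) : MvPolynomial (Fin m) (ZMod 2)).support :=
          MvPolynomial.mem_support_iff.mpr h1
        have hβi := ih _ hβ i
        rw [Finsupp.tsub_apply] at hβi
        by_cases hij : i = j
        · subst hij
          rw [if_neg hj] at hβi
          rw [Finsupp.single_eq_same] at hβi
          simp only [Finset.mem_insert, true_or, if_pos]
          omega
        · rw [Finsupp.single_eq_of_ne' (Ne.symm hij)] at hβi
          simp only [Finset.mem_insert, hij, false_or]
          omega
      · exact absurd rfl h1
    · have := ih _ h2 i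
      by_cases hiS : i ∈ S
      · simp [hiS, if_pos (Finset.mem_insert_of_mem hiS)] at this ⊢
        exact this
      · rw [if_neg hiS] at this
        omega

lemma prod_X_eq (m : ℕ) (I : Finset (Fin m)) :
    (∏ i ∈ I, X i : MvPolynomial (Fin m) (ZMod 2)) =
      monomial (∑ i ∈ I, Finsupp.single i 1) 1 := by
  classical
  induction I using Finset.induction_on with
  | empty => simp [monomial_zero']
  | @insert j I hj ih =>
    rw [Finset.prod_insert hj, Finset.sum_insert hj, ih]
    rw [show (X j : MvPolynomial (Fin m) (ZMod 2)) = monomial (Finsupp.single j 1) 1 from rfl,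
      monomial_mul, one_mul]

lemma sq_phi (m : ℕ) (f : MvPolynomial (Fin m) (ZMod 2))
    (hf : ∀ α ∈ f.support, ∀ i : Fin m, α i ≤ 1) :
    ∀ β ∈ (phi m f).support, ∀ i : Fin m, β i ≤ 1 := by
  classical
  intro β hβ i
  have hrep : phi m f = ∑ α ∈ f.support, phi m (monomial α (coeff α f)) := by
    rw [← map_sum, support_sum_monomial_coeff]
  rw [hrep] at hβ
  obtain ⟨α, hαf, hβα⟩ := Finset.mem_biUnion.mp (MvPolynomial.support_sum hβ)
  have hmono : phi m (monomial α (coeff α f)) =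
      C (coeff α f) * ∏ j ∈ α.support, (X j + 1) := by
    rw [phi, aeval_monomial]
    congr 1
    rw [Finsupp.prod]
    refine Finset.prod_congr rfl fun j hj => ?_
    have h1 : α j = 1 := by
      have := hf α hαf j
      have := Finsupp.mem_support_iff.mp hj
      omega
    rw [h1, pow_one]
  rw [hmono, ← smul_eq_C_mul] at hβα
  have hβα' := MvPolynomial.support_smul hβα
  have := sq_prod m α.support β hβα' i
  split_ifs at this <;> omega

lemma phi_gI (m : ℕ) (I : Finset (Fin m)) :
    phi m (gI m I) = monomial (∑ i ∈ I, Finsupp.single i 1) 1 := by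
  rw [gI, map_prod, ← prod_X_eq]
  refine Finset.prod_congr rfl fun i _ => ?_
  rw [map_sub, map_one, phi, aeval_X, add_sub_cancel_right]

lemma phi_H (m : ℕ) (i : Fin m) :
    phi m (X i ^ 2 - 1) = monomial (Finsupp.single i 2) 1 := by
  rw [map_sub, map_one, map_pow, phi, aeval_X, ← X_pow_eq_monomial]
  have : (X i + 1 : MvPolynomial (Fin m) (ZMod 2)) ^ 2 - 1
      = X i ^ 2 + (1 + 1) * X i := by ring
  rw [this, one_one, zero_mul, add_zero]

/-- if f is a sum of squarefree monomials (all exponents 0 or 1), then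
f ∈ ⟨G⟩ ↔ f ∈ ⟨G ∪ H⟩. -/
theorem stmt10 (m l : ℕ) (hl1 : 1 ≤ l) (hlm : l ≤ m)
    (f : MvPolynomial (Fin m) (ZMod 2))
    (hf : ∀ α ∈ f.support, ∀ i : Fin m, α i ≤ 1) :
    f ∈ Ideal.span (Gset m l) ↔ f ∈ Ideal.span (Gset m l ∪ Hset m) := by
  classical
  constructor
  · exact fun h => Ideal.span_mono Set.subset_union_left h
  · intro h
    rw [mem_span_iff] at h ⊢
    have hG : phi m '' Gset m l =
        (fun α => monomial α (1 : ZMod 2)) ''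
          {α | ∃ I : Finset (Fin m), I.card = l ∧ α = ∑ i ∈ I, Finsupp.single i 1} := by
      ext p
      constructor
      · rintro ⟨q, ⟨I, hI, rfl⟩, rfl⟩
        exact ⟨∑ i ∈ I, Finsupp.single i 1, ⟨I, hI, rfl⟩, (phi_gI m I).symm⟩
      · rintro ⟨α, ⟨I, hI, rfl⟩, rfl⟩
        exact ⟨gI m I, ⟨I, hI, rfl⟩, phi_gI m I⟩
    have hH : phi m '' Hset m =
        (fun α => monomial α (1 : ZMod 2)) '' {α | ∃ i : Fin m, α = Finsupp.single i 2} := by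
      ext p
      constructor
      · rintro ⟨q, ⟨i, rfl⟩, rfl⟩
        exact ⟨Finsupp.single i 2, ⟨i, rfl⟩, (phi_H m i).symm⟩
      · rintro ⟨α, ⟨i, rfl⟩, rfl⟩
        exact ⟨X i ^ 2 - 1, ⟨i, rfl⟩, phi_H m i⟩
    rw [Set.image_union, hG, hH, ← Set.image_union] at h
    rw [hG]
    rw [mem_ideal_span_monomial_image] at h ⊢
    intro β hβ
    obtain ⟨α, hα, hle⟩ := h β hβ
    rcases hα with ⟨I, hI, rfl⟩ | ⟨i, rfl⟩
    · exact ⟨_, ⟨I, hI, rfl⟩, hle⟩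
    · exfalso
      have h2 : (Finsupp.single i 2) i ≤ β i := Finsupp.le_def.mp hle i
      rw [Finsupp.single_eq_same] at h2
      have := sq_phi m f hf β hβ i
      omega
end

section
/- Let I ⊆ {1,...,m}. If |I| < l then the remainder of X_I on division by G is X_I itself. If |I| = l, then the remainder of X_I on division by G is Σ_{L ⊊ I} X_L (the sum over all proper subsets of I), which has exactly 2^l - 1 terms, strictly more than t, where t is the largest integer with 2t+1 ≤ 2^l. -/
set_option synthInstance.maxHeartbeats 1000000
set_option maxHeartbeats 1000000

open MvPolynomial

open Finset in
private noncomputable def eF (m : ℕ) (L : Finset (Fin m)) : (Fin m) →₀ ℕ :=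
  ∑ i ∈ L, Finsupp.single i 1

private lemma XI_eq (m : ℕ) (L : Finset (Fin m)) : XI m L = monomial (eF m L) 1 := by
  classical
  induction L using Finset.induction with
  | empty => simp [XI, eF]
  | insert _ _ h ih =>
      rw [XI, Finset.prod_insert h, ← XI, ih, X, monomial_mul, one_mul]
      congr 1
      rw [eF, eF, Finset.sum_insert h]

private lemma eF_support (m : ℕ) (L : Finset (Fin m)) : (eF m L).support = L := by
  ext j
  simp only [eF, Finsupp.mem_support_iff, Finsupp.finset_sum_apply, Finsupp.single_apply]
  rw [Finset.sum_ite_eq' L j (fun _ => 1)]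
  split <;> simp_all

private lemma eF_inj (m : ℕ) : Function.Injective (eF m) := by
  intro a b h
  rw [← eF_support m a, ← eF_support m b, h]

private lemma support_sum_mon (m : ℕ) (T : Finset ((Fin m) →₀ ℕ)) :
    (∑ β ∈ T, (monomial β (1 : ZMod 2))).support = T := by
  ext α
  simp only [MvPolynomial.mem_support_iff, coeff_sum, coeff_monomial]
  rw [Finset.sum_ite_eq' T α (fun _ => 1)]
  split <;> simp_all

private lemma support_sum_XI (m : ℕ) (s : Finset (Finset (Fin m))) :
    (∑ L ∈ s, XI m L).support = s.image (eF m) := by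
  have h1 : (∑ L ∈ s, XI m L) = ∑ β ∈ s.image (eF m), monomial β 1 := by
    rw [Finset.sum_image (fun a _ b _ h => eF_inj m h)]
    exact Finset.sum_congr rfl fun L _ => XI_eq m L
  rw [h1, support_sum_mon]

private lemma gI_eq_sum (m : ℕ) (I : Finset (Fin m)) :
    gI m I = ∑ L ∈ I.powerset, XI m L := by
  have h : ∀ i ∈ I, (X i - 1 : MvPolynomial (Fin m) (ZMod 2)) = X i + 1 := by
    intro i _
    rw [sub_eq_add_neg]
    congr 1
    exact (CharTwo.neg_eq 1)
  rw [gI, Finset.prod_congr rfl h, Finset.prod_add]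
  exact Finset.sum_congr rfl fun L _ => by simp [XI]


/-- `IsRemainder m l f r` : r is the remainder of f on division by the Groebner basis
G = {∏_{i∈I}(Xᵢ-1) : |I| = l} (grlex order): f - r ∈ ⟨G⟩ and no term of r is divisible
by any of the leading terms X_I (|I| = l) of the members of G. -/
def IsRemainder (m l : ℕ) (f r : MvPolynomial (Fin m) (ZMod 2)) : Prop :=
  f - r ∈ Ideal.span (Gset m l) ∧
  ∀ α ∈ r.support, ∀ I : Finset (Fin m), I.card = l → ¬ I ⊆ α.support

/-- if |I| < l, the remainder of X_I mod G is X_I itself; if |I| = l, the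
remainder of X_I is Σ_{L ⊊ I} X_L, which has exactly 2ˡ - 1 terms, strictly more than t,
where t is the largest integer with 2t + 1 ≤ 2ˡ. -/
theorem stmt13 (m l t : ℕ) (hl1 : 1 ≤ l) (hlm : l ≤ m)
    (ht : 2 * t + 1 ≤ 2 ^ l ∧ ∀ s : ℕ, 2 * s + 1 ≤ 2 ^ l → s ≤ t)
    (I : Finset (Fin m)) :
    (I.card < l → IsRemainder m l (XI m I) (XI m I)) ∧
    (I.card = l →
      IsRemainder m l (XI m I) (∑ L ∈ I.powerset.erase I, XI m L) ∧
      (∑ L ∈ I.powerset.erase I, XI m L).support.card = 2 ^ l - 1 ∧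
      t < 2 ^ l - 1) := by
  classical
  have h2 : (2 : ℕ) ≤ 2 ^ l := by
    calc (2:ℕ) = 2 ^ 1 := rfl
    _ ≤ 2 ^ l := Nat.pow_le_pow_right (by norm_num) hl1
  constructor
  · intro hcard
    constructor
    · simp [Ideal.zero_mem]
    · intro α hα J hJ hsub
      rw [XI_eq, support_monomial, if_neg one_ne_zero, Finset.mem_singleton] at hα
      subst hα
      rw [eF_support] at hsub
      have := Finset.card_le_card hsub
      omega
  · intro hcard
    refine ⟨⟨?_, ?_⟩, ?_, by omega⟩
    · have hdiff : XI m I - ∑ L ∈ I.powerset.erase I, XI m L = gI m I := by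
        rw [gI_eq_sum, ← Finset.add_sum_erase _ _ (Finset.mem_powerset_self I),
          sub_eq_add_neg]
        congr 1
        exact (CharTwo.neg_eq _)
      rw [hdiff]
      exact Ideal.subset_span ⟨I, hcard, rfl⟩
    · intro α hα J hJ hsub
      rw [support_sum_XI, Finset.mem_image] at hα
      obtain ⟨L, hL, rfl⟩ := hα
      rw [eF_support] at hsub
      rw [Finset.mem_erase, Finset.mem_powerset] at hL
      have hLI : L.card < l := by
        rw [← hcard]
        exact Finset.card_lt_card (Finset.ssubset_iff_subset_ne.mpr ⟨hL.2, hL.1⟩)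
      have := Finset.card_le_card hsub
      omega
    · rw [support_sum_XI, Finset.card_image_of_injective _ (eF_inj m),
        Finset.card_erase_of_mem (Finset.mem_powerset_self I), Finset.card_powerset, hcard]
end
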